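/- Let T be a tree, let u be a vertex of T contained in some (γ_t-τ)-set, let P_4 = (v,x,y,z) be a path on 4 new vertices, and let T_1 = T +_{uv} P_4 (add the path and the edge uv). Then γ_t(T_1) = γ_t(T) + 2 and τ(T_1) = τ(T) + 2. -/

import Mathlib

open SimpleGraph

/-- `D` is a total dominating set of `G`: every vertex has a neighbor in `D`. -/
def IsTotalDomSet {V : Type*} (G : SimpleGraph V) (D : Finset V) : Prop :=
  ∀ v : V, ∃ u ∈ D, G.Adj v u

/-- `X` is a vertex cover of `G`: every edge has an endpoint in `X`. -/
def IsVertexCover {V : Type*} (G : SimpleGraph V) (X : Finset V) : Prop :=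
  ∀ ⦃a b : V⦄, G.Adj a b → a ∈ X ∨ b ∈ X

/-- The total domination number `γ_t(G)`. -/
noncomputable def gammaT {V : Type*} (G : SimpleGraph V) : ℕ :=
  sInf {n | ∃ D : Finset V, IsTotalDomSet G D ∧ D.card = n}

/-- The vertex cover number `τ(G)`. -/
noncomputable def tau {V : Type*} (G : SimpleGraph V) : ℕ :=
  sInf {n | ∃ X : Finset V, _root_.IsVertexCover G X ∧ X.card = n}

/-- A `(γ_t-τ)`-set: simultaneously a minimum total dominating set and a
minimum vertex cover. -/
def IsGttSet {V : Type*} (G : SimpleGraph V) (D : Finset V) : Prop :=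
  IsTotalDomSet G D ∧ _root_.IsVertexCover G D ∧ D.card = gammaT G ∧ D.card = tau G

/-- The sum `G +_{uv} H`: the disjoint union of `G` and `H` with the extra edge `uv`. -/
def graphSum {α β : Type*} (G : SimpleGraph α) (H : SimpleGraph β) (u : α) (v : β) :
    SimpleGraph (α ⊕ β) :=
  SimpleGraph.fromRel (fun x y =>
    (∃ a b, x = Sum.inl a ∧ y = Sum.inl b ∧ G.Adj a b) ∨
    (∃ a b, x = Sum.inr a ∧ y = Sum.inr b ∧ H.Adj a b) ∨
    (x = Sum.inl u ∧ y = Sum.inr v))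

/-- The private neighborhood `pn(u,S) = {w : N(w) ∩ S = {u}}`. -/
def pn {V : Type*} (G : SimpleGraph V) (S : Finset V) (u : V) : Set V :=
  {w | G.neighborSet w ∩ ↑S = {u}}

/-- `v` is quasi-isolated: for some minimum total dominating set `S` there is
`u ∈ S` with `pn(u,S) = {v}`. -/
def QuasiIsolated {V : Type*} (G : SimpleGraph V) (v : V) : Prop :=
  ∃ S : Finset V, IsTotalDomSet G S ∧ S.card = gammaT G ∧ ∃ u ∈ S, pn G S u = {v}

/-- An end vertex: a vertex of degree 1. -/
def IsEndVertex {V : Type*} (G : SimpleGraph V) (v : V) : Prop :=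
  (G.neighborSet v).ncard = 1

/-!
In `T₁ = T +_{uv} P₄`, adding the middle vertices `x, y` of the path to a `(γ_t-τ)`-set of `T`
containing `u` gives a total dominating set and a vertex cover of `T₁`, so both parameters grow
by at most `2`. Conversely, every vertex cover of `T₁` restricts to vertex covers of `T` and of
`P₄`, and `τ(P₄) = 2`. A total dominating set `S` of `T₁` must contain `y` (the only neighbour of
`z`) and a neighbour of `y`; its part in `T` dominates `T` except possibly `u`, and `u` is left
undominated only when `v ∈ S`, in which case `S` has at least three vertices on the path and one
neighbour of `u` in `T` can be added.
-/

section Extremal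

variable {V : Type*} {G : SimpleGraph V}

lemma gammaT_le_card {D : Finset V} (hD : IsTotalDomSet G D) : gammaT G ≤ D.card :=
  Nat.sInf_le ⟨D, hD, rfl⟩

lemma tau_le_card {X : Finset V} (hX : _root_.IsVertexCover G X) : tau G ≤ X.card :=
  Nat.sInf_le ⟨X, hX, rfl⟩

lemma IsTotalDomSet.exists_card_eq_gammaT {D : Finset V} (hD : IsTotalDomSet G D) :
    ∃ S, IsTotalDomSet G S ∧ S.card = gammaT G :=
  Nat.sInf_mem (s := {n | ∃ S, IsTotalDomSet G S ∧ S.card = n}) ⟨D.card, D, hD, rfl⟩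

lemma IsVertexCover.exists_card_eq_tau {X : Finset V} (hX : _root_.IsVertexCover G X) :
    ∃ Y, _root_.IsVertexCover G Y ∧ Y.card = tau G :=
  Nat.sInf_mem (s := {n | ∃ Y, _root_.IsVertexCover G Y ∧ Y.card = n}) ⟨X.card, X, hX, rfl⟩

end Extremal

section GraphSum

variable {α β : Type*} {G : SimpleGraph α} {H : SimpleGraph β} {u : α} {v : β}

@[simp]
lemma graphSum_adj_inl_inl (a b : α) :
    (graphSum G H u v).Adj (Sum.inl a) (Sum.inl b) ↔ G.Adj a b := by
  simp +contextual [graphSum, G.adj_comm b a, G.ne_of_adj]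

@[simp]
lemma graphSum_adj_inr_inr (a b : β) :
    (graphSum G H u v).Adj (Sum.inr a) (Sum.inr b) ↔ H.Adj a b := by
  simp +contextual [graphSum, H.adj_comm b a, H.ne_of_adj]

@[simp]
lemma graphSum_adj_inl_inr (a : α) (b : β) :
    (graphSum G H u v).Adj (Sum.inl a) (Sum.inr b) ↔ a = u ∧ b = v := by
  simp [graphSum]

@[simp]
lemma graphSum_adj_inr_inl (a : α) (b : β) :
    (graphSum G H u v).Adj (Sum.inr b) (Sum.inl a) ↔ a = u ∧ b = v := by
  rw [adj_comm, graphSum_adj_inl_inr]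

lemma IsTotalDomSet.disjSum_graphSum {D : Finset α} {E : Finset β} (hD : IsTotalDomSet G D)
    (hE : IsTotalDomSet H E) : IsTotalDomSet (graphSum G H u v) (D.disjSum E) := by
  rintro (a | b)
  · obtain ⟨c, hc, hac⟩ := hD a
    exact ⟨Sum.inl c, by simpa using hc, by simpa using hac⟩
  · obtain ⟨c, hc, hbc⟩ := hE b
    exact ⟨Sum.inr c, by simpa using hc, by simpa using hbc⟩

lemma IsVertexCover.disjSum_graphSum {X : Finset α} {Y : Finset β}
    (hX : _root_.IsVertexCover G X) (hY : _root_.IsVertexCover H Y) (hu : u ∈ X) :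
    _root_.IsVertexCover (graphSum G H u v) (X.disjSum Y) := by
  rintro (a | b) (c | d) h
  · simpa using hX ((graphSum_adj_inl_inl a c).1 h)
  · obtain ⟨rfl, -⟩ := (graphSum_adj_inl_inr a d).1 h
    simp [hu]
  · obtain ⟨rfl, -⟩ := (graphSum_adj_inr_inl c b).1 h
    simp [hu]
  · simpa using hY ((graphSum_adj_inr_inr b d).1 h)

lemma tau_add_tau_le_card_of_isVertexCover_graphSum {X : Finset (α ⊕ β)}
    (hX : _root_.IsVertexCover (graphSum G H u v) X) : tau G + tau H ≤ X.card := by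
  rw [← Finset.card_toLeft_add_card_toRight]
  refine add_le_add (tau_le_card (X := X.toLeft) fun a b h ↦ ?_)
    (tau_le_card (X := X.toRight) fun a b h ↦ ?_)
  · simpa using hX ((graphSum_adj_inl_inl a b).2 h)
  · simpa using hX ((graphSum_adj_inr_inr a b).2 h)

variable {S : Finset (α ⊕ β)}

lemma IsTotalDomSet.exists_adj_toLeft_graphSum (hS : IsTotalDomSet (graphSum G H u v) S)
    {a : α} (ha : a ≠ u ∨ Sum.inr v ∉ S) : ∃ c ∈ S.toLeft, G.Adj a c := by
  obtain ⟨c | c, hc, hac⟩ := hS (Sum.inl a)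
  · exact ⟨c, by simpa using hc, by simpa using hac⟩
  · obtain ⟨rfl, rfl⟩ := (graphSum_adj_inl_inr a c).1 hac
    simp_all

lemma IsTotalDomSet.exists_adj_toRight_graphSum (hS : IsTotalDomSet (graphSum G H u v) S)
    {b : β} (hb : b ≠ v) : ∃ c ∈ S.toRight, H.Adj b c := by
  obtain ⟨c | c, hc, hbc⟩ := hS (Sum.inr b)
  · exact absurd ((graphSum_adj_inr_inl c b).1 hbc).2 hb
  · exact ⟨c, by simpa using hc, by simpa using hbc⟩

lemma gammaT_le_card_toLeft_of_isTotalDomSet_graphSum (hS : IsTotalDomSet (graphSum G H u v) S)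
    (hv : Sum.inr v ∉ S) : gammaT G ≤ S.toLeft.card :=
  gammaT_le_card fun _ ↦ hS.exists_adj_toLeft_graphSum (Or.inr hv)

lemma gammaT_le_card_toLeft_add_one_of_isTotalDomSet_graphSum {x : α}
    (hS : IsTotalDomSet (graphSum G H u v) S) (hux : G.Adj u x) :
    gammaT G ≤ S.toLeft.card + 1 := by
  classical
  refine (gammaT_le_card fun a ↦ ?_).trans (Finset.card_insert_le x _)
  rcases eq_or_ne a u with rfl | ha
  · exact ⟨x, Finset.mem_insert_self _ _, hux⟩
  · obtain ⟨c, hc, hac⟩ := hS.exists_adj_toLeft_graphSum (Or.inl ha)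
    exact ⟨c, Finset.mem_insert_of_mem hc, hac⟩

end GraphSum

section PathGraphFour

lemma isTotalDomSet_pathGraph_four_one_two : IsTotalDomSet (pathGraph 4) {1, 2} := by
  unfold IsTotalDomSet
  simp only [pathGraph_adj]
  decide

lemma isVertexCover_pathGraph_four_one_two : _root_.IsVertexCover (pathGraph 4) {1, 2} := by
  unfold _root_.IsVertexCover
  simp only [pathGraph_adj]
  decide

lemma tau_pathGraph_four : tau (pathGraph 4) = 2 := by
  refine le_antisymm (tau_le_card isVertexCover_pathGraph_four_one_two) ?_
  obtain ⟨X, hX, hXc⟩ := isVertexCover_pathGraph_four_one_two.exists_card_eq_tau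
  rw [← hXc]
  clear hXc
  revert X
  unfold _root_.IsVertexCover
  simp only [pathGraph_adj]
  decide

/-- `R` must contain `2`, the only neighbour of `3`, together with one of the neighbours `1, 3`
of `2`. -/
lemma two_add_ite_le_card_of_dominates_pathGraph_four (R : Finset (Fin 4))
    (hR : ∀ b ≠ 0, ∃ c ∈ R, (pathGraph 4).Adj b c) :
    2 + (if 0 ∈ R then 1 else 0) ≤ R.card := by
  revert R
  simp only [pathGraph_adj]
  decide

lemma IsTotalDomSet.gammaT_add_two_le_card {α : Type*} {G : SimpleGraph α} {u x : α}
    {S : Finset (α ⊕ Fin 4)} (hS : IsTotalDomSet (graphSum G (pathGraph 4) u 0) S)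
    (hux : G.Adj u x) : gammaT G + 2 ≤ S.card := by
  have hR := two_add_ite_le_card_of_dominates_pathGraph_four S.toRight
    fun _ hb ↦ hS.exists_adj_toRight_graphSum hb
  rw [← Finset.card_toLeft_add_card_toRight]
  by_cases hv : Sum.inr 0 ∈ S
  · rw [if_pos (Finset.mem_toRight.2 hv)] at hR
    have hL := gammaT_le_card_toLeft_add_one_of_isTotalDomSet_graphSum hS hux
    omega
  · rw [if_neg (mt Finset.mem_toRight.1 hv)] at hR
    have hL := gammaT_le_card_toLeft_of_isTotalDomSet_graphSum hS hv
    omega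

end PathGraphFour

theorem stmt11_general {V : Type*} (T : SimpleGraph V) (u : V)
    (hu : ∃ D : Finset V, IsGttSet T D ∧ u ∈ D) :
    gammaT (graphSum T (SimpleGraph.pathGraph 4) u 0) = gammaT T + 2 ∧
    tau (graphSum T (SimpleGraph.pathGraph 4) u 0) = tau T + 2 := by
  obtain ⟨D, ⟨hDtd, hDvc, hDg, hDt⟩, huD⟩ := hu
  obtain ⟨x, -, hux⟩ := hDtd u
  have hS₀ : IsTotalDomSet (graphSum T (pathGraph 4) u 0) (D.disjSum {1, 2}) :=
    hDtd.disjSum_graphSum isTotalDomSet_pathGraph_four_one_two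
  have hX₀ : _root_.IsVertexCover (graphSum T (pathGraph 4) u 0) (D.disjSum {1, 2}) :=
    hDvc.disjSum_graphSum isVertexCover_pathGraph_four_one_two huD
  obtain ⟨S, hS, hSc⟩ := hS₀.exists_card_eq_gammaT
  obtain ⟨X, hX, hXc⟩ := hX₀.exists_card_eq_tau
  refine ⟨le_antisymm ?_ ?_, le_antisymm ?_ ?_⟩
  · simpa [hDg] using gammaT_le_card hS₀
  · exact hSc ▸ hS.gammaT_add_two_le_card hux
  · simpa [hDt] using tau_le_card hX₀
  · simpa [hXc, tau_pathGraph_four] using tau_add_tau_le_card_of_isVertexCover_graphSum hX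

/-- Operation `O_1`: attaching a `P_4 = (v,x,y,z)` by the edge `uv` (where `v` is a leaf
of the `P_4`) to a vertex `u` in some `(γ_t-τ)`-set raises `γ_t` and `τ` by `2`. -/
theorem stmt11 {V : Type*} (T : SimpleGraph V) (hT : T.IsTree) (u : V)
    (hu : ∃ D : Finset V, IsGttSet T D ∧ u ∈ D) :
    gammaT (graphSum T (SimpleGraph.pathGraph 4) u 0) = gammaT T + 2 ∧
    tau (graphSum T (SimpleGraph.pathGraph 4) u 0) = tau T + 2 :=
  stmt11_general T u hu
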